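/- Suppose for each t, Z_{t+1} is conditionally independent of X given (Z_t, S_t), where S_t are external signals. Then for all T ≥ 0, I(X; Z_T) ≤ I(X; Z_0) + Σ_{t=0}^{T−1} I(X; S_t | Z_t). -/

import Mathlib

open scoped BigOperators Classical
open Real Filter

/-- A probability mass function on a finite sample space. -/
def IsPMF {Ω : Type*} [Fintype Ω] (p : Ω → ℝ) : Prop :=
  (∀ ω, 0 ≤ p ω) ∧ (∑ ω, p ω) = 1

/-- Marginal probability P(X = x). -/
noncomputable def m1 {Ω α : Type*} [Fintype Ω] (p : Ω → ℝ) (X : Ω → α) (x : α) : ℝ :=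
  ∑ ω, if X ω = x then p ω else 0

/-- Joint probability P(X = x, Y = y). -/
noncomputable def m2 {Ω α β : Type*} [Fintype Ω] (p : Ω → ℝ) (X : Ω → α) (Y : Ω → β)
    (x : α) (y : β) : ℝ :=
  ∑ ω, if X ω = x ∧ Y ω = y then p ω else 0

/-- Joint probability P(X = x, Y = y, W = w). -/
noncomputable def m3 {Ω α β γ : Type*} [Fintype Ω] (p : Ω → ℝ) (X : Ω → α) (Y : Ω → β)
    (W : Ω → γ) (x : α) (y : β) (w : γ) : ℝ :=
  ∑ ω, if X ω = x ∧ Y ω = y ∧ W ω = w then p ω else 0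

/-- Shannon mutual information I(X; Y) (with the convention log 0 = 0, x/0 = 0). -/
noncomputable def MI {Ω α β : Type*} [Fintype Ω] [Fintype α] [Fintype β]
    (p : Ω → ℝ) (X : Ω → α) (Y : Ω → β) : ℝ :=
  ∑ x, ∑ y, m2 p X Y x y * Real.log (m2 p X Y x y / (m1 p X x * m1 p Y y))

/-- Conditional mutual information I(X; Y ∣ W). -/
noncomputable def CMI {Ω α β γ : Type*} [Fintype Ω] [Fintype α] [Fintype β] [Fintype γ]
    (p : Ω → ℝ) (X : Ω → α) (Y : Ω → β) (W : Ω → γ) : ℝ :=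
  ∑ x, ∑ y, ∑ w, m3 p X Y W x y w *
    Real.log (m3 p X Y W x y w * m1 p W w / (m2 p X W x w * m2 p Y W y w))

/-- X and Z are conditionally independent given W. -/
def CondIndepGiven {Ω α β γ : Type*} [Fintype Ω] (p : Ω → ℝ)
    (X : Ω → α) (Z : Ω → β) (W : Ω → γ) : Prop :=
  ∀ x z w, m3 p X Z W x z w * m1 p W w = m2 p X W x w * m2 p Z W z w

/-- Shannon entropy H(X). -/
noncomputable def Ent {Ω α : Type*} [Fintype Ω] [Fintype α] (p : Ω → ℝ) (X : Ω → α) : ℝ :=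
  -∑ x, m1 p X x * Real.log (m1 p X x)

/-- Binary entropy function. -/
noncomputable def h2 (x : ℝ) : ℝ := -(x * Real.log x) - (1 - x) * Real.log (1 - x)

section auxlem
variable {Ω α β γ : Type*} [Fintype Ω] {p : Ω → ℝ}

lemma sum_ite_mono {P Q : Ω → Prop} [∀ ω, Decidable (P ω)] [∀ ω, Decidable (Q ω)]
    (hp : ∀ ω, 0 ≤ p ω) (h : ∀ ω, P ω → Q ω) :
    ∑ ω, (if P ω then p ω else 0) ≤ ∑ ω, (if Q ω then p ω else 0) := by
  apply Finset.sum_le_sum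
  intro ω _
  by_cases hP : P ω
  · simp [hP, h ω hP]
  · simp only [hP, if_false]
    by_cases hQ : Q ω <;> simp [hQ, hp ω]

lemma m1_nonneg (hp : ∀ ω, 0 ≤ p ω) (X : Ω → α) (x : α) : 0 ≤ m1 p X x :=
  Finset.sum_nonneg fun ω _ => by by_cases h : X ω = x <;> simp [h, hp ω]

lemma m2_nonneg (hp : ∀ ω, 0 ≤ p ω) (X : Ω → α) (Y : Ω → β) (x y) : 0 ≤ m2 p X Y x y :=
  Finset.sum_nonneg fun ω _ => by by_cases h : X ω = x ∧ Y ω = y <;> simp [h, hp ω]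

lemma m3_nonneg (hp : ∀ ω, 0 ≤ p ω) (X : Ω → α) (Y : Ω → β) (W : Ω → γ) (x y w) :
    0 ≤ m3 p X Y W x y w :=
  Finset.sum_nonneg fun ω _ => by by_cases h : X ω = x ∧ Y ω = y ∧ W ω = w <;> simp [h, hp ω]

lemma m3_le_m2XZ (hp : ∀ ω, 0 ≤ p ω) (X : Ω → α) (Y : Ω → β) (W : Ω → γ) (x y w) :
    m3 p X Y W x y w ≤ m2 p X W x w := by
  unfold m3 m2; exact sum_ite_mono hp fun ω h => ⟨h.1, h.2.2⟩

lemma m3_le_m2YZ (hp : ∀ ω, 0 ≤ p ω) (X : Ω → α) (Y : Ω → β) (W : Ω → γ) (x y w) :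
    m3 p X Y W x y w ≤ m2 p Y W y w := by
  unfold m3 m2; exact sum_ite_mono hp fun ω h => ⟨h.2.1, h.2.2⟩

lemma m3_le_m1X (hp : ∀ ω, 0 ≤ p ω) (X : Ω → α) (Y : Ω → β) (W : Ω → γ) (x y w) :
    m3 p X Y W x y w ≤ m1 p X x := by
  unfold m3 m1; exact sum_ite_mono hp fun ω h => h.1

lemma m3_le_m1W (hp : ∀ ω, 0 ≤ p ω) (X : Ω → α) (Y : Ω → β) (W : Ω → γ) (x y w) :
    m3 p X Y W x y w ≤ m1 p W w := by
  unfold m3 m1; exact sum_ite_mono hp fun ω h => h.2.2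

lemma m2_le_m1_right (hp : ∀ ω, 0 ≤ p ω) (X : Ω → α) (Y : Ω → β) (x y) :
    m2 p X Y x y ≤ m1 p Y y := by
  unfold m2 m1; exact sum_ite_mono hp fun ω h => h.2

-- marginalization identities
lemma sum_m3_middle [Fintype β] (X : Ω → α) (Y : Ω → β) (W : Ω → γ) (x w) :
    ∑ y, m3 p X Y W x y w = m2 p X W x w := by
  unfold m3 m2
  rw [Finset.sum_comm]
  refine Finset.sum_congr rfl fun ω _ => ?_
  by_cases h : X ω = x ∧ W ω = w
  · rw [Finset.sum_eq_single (Y ω)]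
    · simp [h.1, h.2]
    · intro b _ hb; simp [Ne.symm hb]
    · simp
  · rw [if_neg h, Finset.sum_eq_zero]
    intro b _
    rw [if_neg]
    rintro ⟨h1, _, h3⟩
    exact h ⟨h1, h3⟩

lemma sum_m3_first [Fintype α] (X : Ω → α) (Y : Ω → β) (W : Ω → γ) (y w) :
    ∑ x, m3 p X Y W x y w = m2 p Y W y w := by
  unfold m3 m2
  rw [Finset.sum_comm]
  refine Finset.sum_congr rfl fun ω _ => ?_
  by_cases h : Y ω = y ∧ W ω = w
  · rw [Finset.sum_eq_single (X ω)]
    · simp [h.1, h.2]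
    · intro b _ hb; simp [Ne.symm hb]
    · simp
  · rw [Finset.sum_eq_zero]
    · rw [if_neg h]
    intro b _
    rw [if_neg]
    rintro ⟨_, h2, h3⟩
    exact h ⟨h2, h3⟩

lemma sum_m2_first [Fintype α] (X : Ω → α) (Y : Ω → β) (y) :
    ∑ x, m2 p X Y x y = m1 p Y y := by
  unfold m2 m1
  rw [Finset.sum_comm]
  refine Finset.sum_congr rfl fun ω _ => ?_
  by_cases h : Y ω = y
  · rw [Finset.sum_eq_single (X ω)]
    · simp [h]
    · intro b _ hb; simp [Ne.symm hb]
    · simp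
  · rw [if_neg h, Finset.sum_eq_zero]
    intro b _
    rw [if_neg]
    rintro ⟨_, h2⟩
    exact h h2

-- m2 with a pair-valued second variable
lemma m2_pair (X : Ω → α) (Y : Ω → β) (W : Ω → γ) (x y w) :
    m2 p X (fun ω => (Y ω, W ω)) x (y, w) = m3 p X Y W x y w := by
  unfold m2 m3
  refine Finset.sum_congr rfl fun ω _ => ?_
  congr 1
  simp [Prod.ext_iff, and_assoc]

lemma m1_pair (Y : Ω → β) (W : Ω → γ) (y w) :
    m1 p (fun ω => (Y ω, W ω)) (y, w) = m2 p Y W y w := by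
  unfold m1 m2
  refine Finset.sum_congr rfl fun ω _ => ?_
  congr 1
  simp [Prod.ext_iff]

end auxlem
section mainlem
variable {Ω α β γ : Type*} [Fintype Ω] [Fintype α] [Fintype β] [Fintype γ] {p : Ω → ℝ}

lemma m2_comm (Y : Ω → β) (W : Ω → γ) (y w) : m2 p Y W y w = m2 p W Y w y := by
  unfold m2
  refine Finset.sum_congr rfl fun ω _ => ?_
  congr 1
  exact propext and_comm

lemma m3_swap23 (X : Ω → α) (Y : Ω → β) (W : Ω → γ) (x y w) :
    m3 p X Y W x y w = m3 p X W Y x w y := by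
  unfold m3
  refine Finset.sum_congr rfl fun ω _ => ?_
  congr 1
  exact propext ⟨fun ⟨h1, h2, h3⟩ => ⟨h1, h3, h2⟩, fun ⟨h1, h2, h3⟩ => ⟨h1, h3, h2⟩⟩

lemma chain_rule (hp : ∀ ω, 0 ≤ p ω) (X : Ω → α) (Y : Ω → β) (Z : Ω → γ) :
    MI p X (fun ω => (Y ω, Z ω)) = MI p X Z + CMI p X Y Z := by
  have hM : MI p X (fun ω => (Y ω, Z ω)) = ∑ x, ∑ y, ∑ z,
      m3 p X Y Z x y z * Real.log (m3 p X Y Z x y z / (m1 p X x * m2 p Y Z y z)) := by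
    unfold MI
    refine Finset.sum_congr rfl fun x _ => ?_
    rw [Fintype.sum_prod_type]
    exact Finset.sum_congr rfl fun y _ => Finset.sum_congr rfl fun z _ => by
      rw [m2_pair, m1_pair]
  have hZ : MI p X Z = ∑ x, ∑ y, ∑ z,
      m3 p X Y Z x y z * Real.log (m2 p X Z x z / (m1 p X x * m1 p Z z)) := by
    unfold MI
    refine Finset.sum_congr rfl fun x _ => ?_
    rw [Finset.sum_comm]
    refine Finset.sum_congr rfl fun z _ => ?_
    nth_rewrite 1 [← sum_m3_middle X Y Z x z]
    rw [Finset.sum_mul]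
  rw [hM, hZ]
  unfold CMI
  rw [← Finset.sum_add_distrib]
  refine Finset.sum_congr rfl fun x _ => ?_
  rw [← Finset.sum_add_distrib]
  refine Finset.sum_congr rfl fun y _ => ?_
  rw [← Finset.sum_add_distrib]
  refine Finset.sum_congr rfl fun z _ => ?_
  by_cases h : m3 p X Y Z x y z = 0
  · simp [h]
  · have h3 : 0 < m3 p X Y Z x y z := lt_of_le_of_ne (m3_nonneg hp X Y Z x y z) (Ne.symm h)
    have hXZ : 0 < m2 p X Z x z := lt_of_lt_of_le h3 (m3_le_m2XZ hp X Y Z x y z)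
    have hYZ : 0 < m2 p Y Z y z := lt_of_lt_of_le h3 (m3_le_m2YZ hp X Y Z x y z)
    have hX : 0 < m1 p X x := lt_of_lt_of_le h3 (m3_le_m1X hp X Y Z x y z)
    have hZz : 0 < m1 p Z z := lt_of_lt_of_le h3 (m3_le_m1W hp X Y Z x y z)
    have e : m3 p X Y Z x y z / (m1 p X x * m2 p Y Z y z)
        = (m2 p X Z x z / (m1 p X x * m1 p Z z))
          * (m3 p X Y Z x y z * m1 p Z z / (m2 p X Z x z * m2 p Y Z y z)) := by
      field_simp
    rw [e, Real.log_mul (by positivity) (by positivity), mul_add]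

lemma gibbs_term {a b : ℝ} (ha : 0 ≤ a) (hb : 0 ≤ b) (hab : a ≠ 0 → 0 < b) :
    a - b ≤ a * Real.log (a / b) := by
  rcases eq_or_lt_of_le ha with h | h
  · rw [← h]; simpa using hb
  · have hb0 : 0 < b := hab h.ne'
    have h1 : Real.log (b / a) ≤ b / a - 1 := Real.log_le_sub_one_of_pos (by positivity)
    have h2 : Real.log (a / b) = -Real.log (b / a) := by
      rw [← Real.log_inv, inv_div]
    have h4 : a * (b / a - 1) = b - a := by field_simp
    rw [h2, mul_neg]
    nlinarith [mul_le_mul_of_nonneg_left h1 h.le]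

lemma CMI_nonneg (hp : ∀ ω, 0 ≤ p ω) (X : Ω → α) (Y : Ω → β) (W : Ω → γ) :
    0 ≤ CMI p X Y W := by
  unfold CMI
  have key : ∀ x y w, m3 p X Y W x y w - m2 p X W x w * m2 p Y W y w / m1 p W w ≤
      m3 p X Y W x y w *
        Real.log (m3 p X Y W x y w * m1 p W w / (m2 p X W x w * m2 p Y W y w)) := by
    intro x y w
    have harg : m3 p X Y W x y w * m1 p W w / (m2 p X W x w * m2 p Y W y w)
        = m3 p X Y W x y w / (m2 p X W x w * m2 p Y W y w / m1 p W w) := by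
      rw [div_div_eq_mul_div]
    rw [harg]
    refine gibbs_term (m3_nonneg hp X Y W x y w)
      (div_nonneg (mul_nonneg (m2_nonneg hp X W x w) (m2_nonneg hp Y W y w)) (m1_nonneg hp W w)) ?_
    intro hne
    have h3 : 0 < m3 p X Y W x y w := lt_of_le_of_ne (m3_nonneg hp X Y W x y w) (Ne.symm hne)
    have h1 : 0 < m2 p X W x w := lt_of_lt_of_le h3 (m3_le_m2XZ hp X Y W x y w)
    have h2 : 0 < m2 p Y W y w := lt_of_lt_of_le h3 (m3_le_m2YZ hp X Y W x y w)
    have h4 : 0 < m1 p W w := lt_of_lt_of_le h3 (m3_le_m1W hp X Y W x y w)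
    positivity
  have hsum : (∑ x, ∑ y, ∑ w, (m3 p X Y W x y w - m2 p X W x w * m2 p Y W y w / m1 p W w)) = 0 := by
    have ha : ∀ x : α, (∑ y, ∑ w, m3 p X Y W x y w) = ∑ w, m2 p X W x w := by
      intro x
      rw [Finset.sum_comm]
      exact Finset.sum_congr rfl fun w _ => sum_m3_middle X Y W x w
    have hb : ∀ x : α, (∑ y : β, ∑ w : γ, m2 p X W x w * m2 p Y W y w / m1 p W w)
        = ∑ w : γ, m2 p X W x w * m1 p W w / m1 p W w := by
      intro x
      rw [Finset.sum_comm]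
      refine Finset.sum_congr rfl fun w _ => ?_
      rw [← Finset.sum_div, ← Finset.mul_sum, sum_m2_first]
    have hsimp : ∀ w : γ, (∑ x : α, m2 p X W x w * m1 p W w / m1 p W w) = m1 p W w := by
      intro w
      rw [← Finset.sum_div, ← Finset.sum_mul, sum_m2_first]
      by_cases h : m1 p W w = 0
      · simp [h]
      · field_simp
    have : (∑ x, ∑ y, ∑ w, (m3 p X Y W x y w - m2 p X W x w * m2 p Y W y w / m1 p W w))
        = (∑ x, ((∑ y, ∑ w, m3 p X Y W x y w) - ∑ y, ∑ w, m2 p X W x w * m2 p Y W y w / m1 p W w)) := by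
      refine Finset.sum_congr rfl fun x _ => ?_
      rw [← Finset.sum_sub_distrib]
      exact Finset.sum_congr rfl fun y _ => by rw [Finset.sum_sub_distrib]
    rw [this]
    have : (∑ x, ((∑ y, ∑ w, m3 p X Y W x y w) - ∑ y, ∑ w, m2 p X W x w * m2 p Y W y w / m1 p W w))
        = ∑ x : α, ((∑ w, m2 p X W x w) - ∑ w, m2 p X W x w * m1 p W w / m1 p W w) := by
      refine Finset.sum_congr rfl fun x _ => ?_
      rw [ha x, hb x]
    rw [this, Finset.sum_sub_distrib, Finset.sum_comm (γ := α), Finset.sum_comm (γ := α)]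
    rw [← Finset.sum_sub_distrib]
    refine Finset.sum_eq_zero fun w _ => ?_
    rw [sum_m2_first, hsimp w, sub_self]
  calc (0:ℝ) = ∑ x, ∑ y, ∑ w, (m3 p X Y W x y w - m2 p X W x w * m2 p Y W y w / m1 p W w) :=
        hsum.symm
    _ ≤ _ := by
        refine Finset.sum_le_sum fun x _ => Finset.sum_le_sum fun y _ =>
          Finset.sum_le_sum fun w _ => key x y w

lemma CMI_eq_zero (hp : ∀ ω, 0 ≤ p ω) {X : Ω → α} {Y : Ω → β} {W : Ω → γ}
    (h : CondIndepGiven p X Y W) : CMI p X Y W = 0 := by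
  unfold CMI
  refine Finset.sum_eq_zero fun x _ => Finset.sum_eq_zero fun y _ =>
    Finset.sum_eq_zero fun w _ => ?_
  by_cases h3 : m3 p X Y W x y w = 0
  · rw [h3, zero_mul]
  · have hpos : 0 < m3 p X Y W x y w := lt_of_le_of_ne (m3_nonneg hp X Y W x y w) (Ne.symm h3)
    have hW : 0 < m1 p W w := lt_of_lt_of_le hpos (m3_le_m1W hp X Y W x y w)
    have hne : m2 p X W x w * m2 p Y W y w ≠ 0 := by
      rw [← h x y w]; positivity
    rw [h x y w, div_self hne, Real.log_one, mul_zero]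

lemma MI_pair_comm (X : Ω → α) (Y : Ω → β) (W : Ω → γ) :
    MI p X (fun ω => (Y ω, W ω)) = MI p X (fun ω => (W ω, Y ω)) := by
  unfold MI
  refine Finset.sum_congr rfl fun x _ => ?_
  rw [Fintype.sum_prod_type, Fintype.sum_prod_type, Finset.sum_comm]
  refine Finset.sum_congr rfl fun w _ => Finset.sum_congr rfl fun y _ => ?_
  rw [m2_pair, m2_pair, m1_pair, m1_pair, m3_swap23, m2_comm]

lemma dpi (hp : ∀ ω, 0 ≤ p ω) (X : Ω → α) (Z' : Ω → β) (W : Ω → γ)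
    (h : CondIndepGiven p X Z' W) : MI p X Z' ≤ MI p X W := by
  have h1 : MI p X (fun ω => (W ω, Z' ω)) = MI p X Z' + CMI p X W Z' := chain_rule hp X W Z'
  have h2 : MI p X (fun ω => (Z' ω, W ω)) = MI p X W + CMI p X Z' W := chain_rule hp X Z' W
  have h3 := MI_pair_comm (p := p) X W Z'
  have h4 : CMI p X Z' W = 0 := CMI_eq_zero hp h
  have h5 : 0 ≤ CMI p X W Z' := CMI_nonneg hp X W Z'
  linarith

end mainlem


/-- Telescoped bound: if for each t, X → (Z_t, S_t) → Z_{t+1} is a Markov chain, then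
I(X; Z_T) ≤ I(X; Z_0) + ∑_{t<T} I(X; S_t ∣ Z_t). -/
theorem telescoped_bound {Ω α ζ σ : Type*} [Fintype Ω] [Fintype α] [Fintype ζ] [Fintype σ]
    (p : Ω → ℝ) (hp : IsPMF p) (X : Ω → α) (Z : ℕ → Ω → ζ) (S : ℕ → Ω → σ)
    (hmc : ∀ t, CondIndepGiven p X (Z (t + 1)) (fun ω => (Z t ω, S t ω))) :
    ∀ T : ℕ, MI p X (Z T) ≤ MI p X (Z 0) + ∑ t ∈ Finset.range T, CMI p X (S t) (Z t) := by
  intro T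
  induction T with
  | zero => simp
  | succ T ih =>
    have hd : MI p X (Z (T + 1)) ≤ MI p X (fun ω => (Z T ω, S T ω)) :=
      dpi hp.1 X (Z (T + 1)) _ (hmc T)
    have hc : MI p X (fun ω => (Z T ω, S T ω)) = MI p X (fun ω => (S T ω, Z T ω)) :=
      MI_pair_comm (p := p) X (Z T) (S T)
    have hch : MI p X (fun ω => (S T ω, Z T ω)) = MI p X (Z T) + CMI p X (S T) (Z T) :=
      chain_rule hp.1 X (S T) (Z T)
    rw [Finset.sum_range_succ]
    linarith
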